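/- arXiv:2504.20855 — 3 statements merged into one kernel-verified Lean document; each statement's English description precedes it below -/
import Mathlib

section
/- Let 0 < α < 1/2 and c > 1 with 1 - α(4/(1-1/c) - 2) > 0. The function g(v) = (v + (1-s)c) / (max((v+1-s)/2, v) - α(v + x + 2/(1-1/c) - 2)) is nonincreasing in v on the region where the denominator is positive, for any fixed s ∈ [0,1) and x ≥ 1. -/
set_option maxHeartbeats 1600000


/-- For `0 < α < 1/2`, `c > 1` with `1 - α(4/(1-1/c) - 2) > 0`, fixed `s ∈ [0,1)` and `x ≥ 1`,
the function `g(v) = (v + (1-s)c) / (max((v+1-s)/2, v) - α(v + x + 2/(1-1/c) - 2))`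
is nonincreasing in `v ≥ 0` on the region where the denominator is positive. -/
theorem stmt4 (α c s x : ℝ) (hα : 0 < α) (hα2 : α < 1 / 2) (hc : 1 < c)
    (hpos : 0 < 1 - α * (4 / (1 - 1 / c) - 2))
    (hs : 0 ≤ s) (hs1 : s < 1) (hx : 1 ≤ x) :
    ∀ v₁ v₂ : ℝ, 0 ≤ v₁ → v₁ ≤ v₂ →
      0 < max ((v₁ + 1 - s) / 2) v₁ - α * (v₁ + x + 2 / (1 - 1 / c) - 2) →
      0 < max ((v₂ + 1 - s) / 2) v₂ - α * (v₂ + x + 2 / (1 - 1 / c) - 2) →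
      (v₂ + (1 - s) * c) / (max ((v₂ + 1 - s) / 2) v₂ - α * (v₂ + x + 2 / (1 - 1 / c) - 2)) ≤
      (v₁ + (1 - s) * c) / (max ((v₁ + 1 - s) / 2) v₁ - α * (v₁ + x + 2 / (1 - 1 / c) - 2)) := by
  intro v₁ v₂ hv1 hle hd1 hd2
  have hc0 : (0:ℝ) < c := lt_trans one_pos hc
  have hc1 : 0 < 1 - 1/c := by
    have : 1/c < 1 := by rw [div_lt_one hc0]; exact hc
    linarith
  set K := 2 / (1 - 1/c) with hKdef
  have hK2 : K * (1 - 1/c) = 2 := div_mul_cancel₀ 2 (ne_of_gt hc1)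
  have hKc : K * (c - 1) = 2 * c := by
    have h1 : (1 - 1/c) * c = c - 1 := by field_simp
    nlinarith [hK2]
  have hK2lt : 2 < K := by nlinarith [hK2, one_div_pos.mpr hc0]
  have hax : α ≤ α * x := le_mul_of_one_le_right hα.le hx
  have hkey0 : (1-s)/2 + α - α*K ≤ (1/2-α)*((1-s)*c) := by
    have H : ((1-s)/2 + α - α*K)*(c-1) ≤ (1/2-α)*((1-s)*c)*(c-1) := by
      nlinarith [hKc,
        mul_nonneg (mul_nonneg (by linarith : (0:ℝ) ≤ 1-s) (by linarith : (0:ℝ) ≤ 1/2-α))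
          (sq_nonneg (c-1)),
        mul_nonneg hα.le (mul_nonneg hs (by linarith : (0:ℝ) ≤ c-1))]
    exact le_of_mul_le_mul_right H (by linarith)
  have hkey : (1-s)/2 - α*(x+K-2) ≤ (1/2-α)*((1-s)*c) := by nlinarith [hkey0, hax]
  have hsc : 0 ≤ (1-s)*c := mul_nonneg (by linarith) hc0.le
  rcases le_total v₂ (1-s) with h2 | h2
  · have h1 : v₁ ≤ 1 - s := le_trans hle h2
    rw [max_eq_left (by linarith : v₁ ≤ (v₁+1-s)/2)] at hd1 ⊢
    rw [max_eq_left (by linarith : v₂ ≤ (v₂+1-s)/2)] at hd2 ⊢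
    rw [div_le_div_iff₀ hd2 hd1]
    nlinarith [mul_nonneg (by linarith : (0:ℝ) ≤ v₂ - v₁)
      (by linarith : (0:ℝ) ≤ (1/2-α)*((1-s)*c) - ((1-s)/2 - α*(x+K-2)))]
  · rcases le_total (1-s) v₁ with h1 | h1
    · rw [max_eq_right (by linarith : (v₁+1-s)/2 ≤ v₁)] at hd1 ⊢
      rw [max_eq_right (by linarith : (v₂+1-s)/2 ≤ v₂)] at hd2 ⊢
      rw [div_le_div_iff₀ hd2 hd1]
      have hB : (0:ℝ) ≤ α*(x+K-2) + (1-α)*((1-s)*c) := by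
        nlinarith [mul_nonneg hα.le (by linarith : (0:ℝ) ≤ x+K-2),
          mul_nonneg (by linarith : (0:ℝ) ≤ 1-α) hsc]
      nlinarith [mul_nonneg (by linarith : (0:ℝ) ≤ v₂ - v₁) hB]
    · rw [max_eq_left (by linarith : v₁ ≤ (v₁+1-s)/2)] at hd1 ⊢
      rw [max_eq_right (by linarith : (v₂+1-s)/2 ≤ v₂)] at hd2 ⊢
      rw [div_le_div_iff₀ hd2 hd1]
      have hC1 := mul_nonneg (by linarith : (0:ℝ) ≤ v₂ - v₁)
        (by linarith : (0:ℝ) ≤ (1/2-α)*((1-s)*c) - ((1-s)/2 - α*(x+K-2)))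
      have hC2 := mul_nonneg (by linarith : (0:ℝ) ≤ v₁ + (1-s)*c)
        (by linarith : (0:ℝ) ≤ v₂ - (1-s))
      nlinarith [hC1, hC2]
end

section
/- For 0 < α < 1/2, the function h(c) = 2c / (1 - α(4/(1-1/c) - 2)), defined for c > 1 with positive denominator, attains its minimum at c* = (2√(2α² + α) + 2α + 1)/(1 - 2α), and the minimum value equals 2(2α + √(α(1+2α)))·(1 + 2α + 2√(α(1+2α))) / ((1-2α)²·√(α(1+2α))). -/
/-!
Writing `a = 1 - 2α`, `b = 1 + 2α`, for `c > 1` the denominator of `h` equals `(a c - b)/(c - 1)`,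
so `h c = 2 c (c - 1)/(a c - b)`. With `d = a c - b`, this is `2 (d + (2b - a) + b (b - a)/d)/a²`,
which by AM–GM is minimal at `d = √(b (b - a)) = 2√(α (1 + 2α))`, i.e. at `c = c*`.
-/

theorem mul_sub_one_div_le_of_sq_eq {a b k c : ℝ} (ha : 0 < a) (hk : 0 < k)
    (hkab : k ^ 2 = b * (b - a)) (hc : 0 < a * c - b) :
    (b + k) / a * ((b + k) / a - 1) / k ≤ c * (c - 1) / (a * c - b) := by
  rw [div_le_div_iff₀ hk hc]
  set c₀ := (b + k) / a with hc₀
  have key : c * (c - 1) * k - c₀ * (c₀ - 1) * (a * c - b) = k * (c - c₀) ^ 2 := by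
    rw [hc₀]; field_simp; linear_combination (a * c - b - k) * hkab
  linarith [mul_nonneg hk.le (sq_nonneg (c - c₀))]

theorem one_sub_mul_four_div_one_sub_inv_sub_two (α : ℝ) {c : ℝ} (hc0 : c ≠ 0) (hc1 : c ≠ 1) :
    1 - α * (4 / (1 - 1 / c) - 2) = ((1 - 2 * α) * c - (1 + 2 * α)) / (c - 1) := by
  have hc1' : c - 1 ≠ 0 := sub_ne_zero.2 hc1
  rw [one_sub_div hc0]
  field_simp
  ring

/-- For `0 < α < 1/2`, the function `h(c) = 2c/(1 - α(4/(1-1/c) - 2))` on the domain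
`c > 1` with positive denominator attains its minimum at
`c* = (2√(2α²+α) + 2α + 1)/(1-2α)`, with minimum value
`2(2α + √(α(1+2α)))(1 + 2α + 2√(α(1+2α)))/((1-2α)²√(α(1+2α)))`. -/
theorem stmt5 (α : ℝ) (hα : 0 < α) (hα2 : α < 1 / 2) :
    let cstar := (2 * Real.sqrt (2 * α ^ 2 + α) + 2 * α + 1) / (1 - 2 * α)
    let h := fun c : ℝ => 2 * c / (1 - α * (4 / (1 - 1 / c) - 2))
    (1 < cstar ∧ 0 < 1 - α * (4 / (1 - 1 / cstar) - 2)) ∧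
    (∀ c : ℝ, 1 < c → 0 < 1 - α * (4 / (1 - 1 / c) - 2) → h cstar ≤ h c) ∧
    h cstar = 2 * (2 * α + Real.sqrt (α * (1 + 2 * α))) *
        (1 + 2 * α + 2 * Real.sqrt (α * (1 + 2 * α))) /
        ((1 - 2 * α) ^ 2 * Real.sqrt (α * (1 + 2 * α))) := by
  intro cstar h
  have ha : 0 < 1 - 2 * α := by linarith
  set s := Real.sqrt (α * (1 + 2 * α)) with hs
  have hs0 : 0 < s := Real.sqrt_pos.2 (by positivity)
  have hk : (2 * s) ^ 2 = (1 + 2 * α) * ((1 + 2 * α) - (1 - 2 * α)) := by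
    rw [mul_pow, hs, Real.sq_sqrt (by positivity)]; ring
  have hcstar : cstar = ((1 + 2 * α) + 2 * s) / (1 - 2 * α) := by
    simp only [cstar, hs, show 2 * α ^ 2 + α = α * (1 + 2 * α) by ring]; ring
  have hc1 : 1 < cstar := by rw [hcstar, one_lt_div ha]; linarith
  have hden : ∀ c, 1 < c → 1 - α * (4 / (1 - 1 / c) - 2) =
      ((1 - 2 * α) * c - (1 + 2 * α)) / (c - 1) := fun c hc =>
    one_sub_mul_four_div_one_sub_inv_sub_two α (by positivity) hc.ne'
  have hh : ∀ c, 1 < c → h c = 2 * (c * (c - 1) / ((1 - 2 * α) * c - (1 + 2 * α))) := by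
    intro c hc
    simp only [h, hden c hc, div_div_eq_mul_div, mul_div_assoc]
  have hdcstar : (1 - 2 * α) * cstar - (1 + 2 * α) = 2 * s := by
    rw [hcstar]; field_simp; ring
  refine ⟨⟨hc1, ?_⟩, fun c hc hpos => ?_, ?_⟩
  · rw [hden cstar hc1, hdcstar]
    exact div_pos (by positivity) (sub_pos.2 hc1)
  · rw [hden c hc] at hpos
    have hdc := (div_pos_iff_of_pos_right (sub_pos.2 hc)).1 hpos
    rw [hh cstar hc1, hh c hc, hdcstar, hcstar]
    gcongr 2 * ?_
    exact mul_sub_one_div_le_of_sq_eq ha (by positivity) hk hdc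
  · rw [hh cstar hc1, hdcstar, hcstar]
    field_simp
    ring
end

section
/- For 0 < α < 1/2, the function F(f) = (f+1)/(1 - α - α·(1/(1 - 1/f))), defined for f > 1 where the denominator is positive, attains its minimum at f* = (-1 + α - √(2α - 3α²))/(-1 + 2α) = (1 - α + √(2α - 3α²))/(1 - 2α), and the minimum value equals 2(1 - α + √((2-3α)α))/(1-2α)². -/
/-- For `0 < α < 1/2`, the function `F(f) = (f+1)/(1 - α - α/(1-1/f))` on the domain
`f > 1` with positive denominator attains its minimum at
`f* = (1 - α + √(2α - 3α²))/(1 - 2α)`, with minimum value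
`2(1 - α + √((2-3α)α))/(1-2α)²`. -/
theorem stmt7 (α : ℝ) (hα : 0 < α) (hα2 : α < 1 / 2) :
    let fstar := (1 - α + Real.sqrt (2 * α - 3 * α ^ 2)) / (1 - 2 * α)
    let F := fun f : ℝ => (f + 1) / (1 - α - α * (1 / (1 - 1 / f)))
    fstar = (-1 + α - Real.sqrt (2 * α - 3 * α ^ 2)) / (-1 + 2 * α) ∧
    (1 < fstar ∧ 0 < 1 - α - α * (1 / (1 - 1 / fstar))) ∧
    (∀ f : ℝ, 1 < f → 0 < 1 - α - α * (1 / (1 - 1 / f)) → F fstar ≤ F f) ∧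
    F fstar = 2 * (1 - α + Real.sqrt ((2 - 3 * α) * α)) / (1 - 2 * α) ^ 2 := by
  intro fstar F
  have ha : (0:ℝ) < 1 - 2 * α := by linarith
  have harg : (0:ℝ) < 2 * α - 3 * α ^ 2 := by nlinarith
  set s := Real.sqrt (2 * α - 3 * α ^ 2) with hsdef
  have hs0 : 0 < s := Real.sqrt_pos.mpr harg
  have hs2 : s ^ 2 = 2 * α - 3 * α ^ 2 := Real.sq_sqrt harg.le
  have hfd : fstar = (1 - α + s) / (1 - 2 * α) := rfl
  have hkey : (1 - 2 * α) * fstar = (1 - α) + s := by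
    rw [hfd]; field_simp
  have hf1 : 1 < fstar := by
    rw [hfd, lt_div_iff₀ ha]; nlinarith
  have hden : ∀ f : ℝ, 1 < f →
      1 - α - α * (1 / (1 - 1 / f)) = ((1 - 2*α)*f - (1-α)) / (f - 1) := by
    intro f hf
    have h0 : f ≠ 0 := by linarith
    have h1 : f - 1 ≠ 0 := by
      intro h; nlinarith
    have h2 : 1 - 1 / f ≠ 0 := by
      have : 1 / f < 1 := by rw [div_lt_one (by linarith)]; linarith
      intro h; linarith
    field_simp
    ring
  have hNstar : (1 - 2*α) * fstar - (1 - α) = s := by linarith [hkey]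
  have hDstar : 0 < 1 - α - α * (1 / (1 - 1 / fstar)) := by
    rw [hden fstar hf1, hNstar]
    exact div_pos hs0 (by linarith)
  have hFstar : F fstar = (fstar + 1) * (fstar - 1) / s := by
    show (fstar + 1) / _ = _
    rw [hden fstar hf1, hNstar, div_div_eq_mul_div]
  have h5 : (fstar + 1) * (fstar - 1) * (1 - 2*α)^2 = 2 * (1 - α + s) * s := by
    linear_combination ((1-2*α)*fstar + (1-α) + s) * hkey - hs2
  refine ⟨?_, ⟨hf1, hDstar⟩, ?_, ?_⟩
  · rw [hfd, show (-1 + α - s) = -(1 - α + s) by ring,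
      show (-1 + 2*α) = -(1 - 2*α) by ring, neg_div_neg_eq]
  · intro f hf hD
    have h1 : (0:ℝ) < f - 1 := by linarith
    have hNf : 0 < (1 - 2*α)*f - (1-α) := by
      rw [hden f hf] at hD
      rcases div_pos_iff.mp hD with ⟨h, _⟩ | ⟨_, h⟩
      · exact h
      · linarith
    have hFf : F f = (f + 1) * (f - 1) / ((1 - 2*α)*f - (1-α)) := by
      show (f + 1) / _ = _
      rw [hden f hf, div_div_eq_mul_div]
    rw [hFstar, hFf, div_le_div_iff₀ hs0 hNf]
    have hexp : (f+1)*(f-1)*(1-2*α)^2 - 2*((1-α)+s)*((1-2*α)*f-(1-α))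
        = ((1-2*α)*f - (1-α) - s)^2 := by
      linear_combination - hs2
    have h7 : (fstar+1)*(fstar-1)*(1-2*α)^2 * ((1-2*α)*f-(1-α))
        = 2*(1-α+s)*s*((1-2*α)*f-(1-α)) := by
      linear_combination ((1-2*α)*f-(1-α)) * h5
    have h8 : 0 ≤ s * ((1-2*α)*f - (1-α) - s)^2 :=
      mul_nonneg hs0.le (sq_nonneg _)
    have h9 : (f+1)*(f-1)*(1-2*α)^2*s - 2*((1-α)+s)*((1-2*α)*f-(1-α))*s
        = s*((1-2*α)*f-(1-α)-s)^2 := by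
      linear_combination s * hexp
    nlinarith [h7, h8, h9, mul_pos ha ha]
  · have h2 : (2 - 3*α) * α = 2*α - 3*α^2 := by ring
    rw [hFstar, h2, ← hsdef, div_eq_div_iff hs0.ne' (by positivity)]
    linear_combination h5
end
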